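/- arXiv:1311.2207 — 2 statements merged into one kernel-verified Lean document; each statement's English description precedes it below -/
import Mathlib

section
/- Let $V, W$ be Banach spaces with $V \subseteq W$, and suppose: (i) $\|S_t\|_{L(W,V)} \le C_1 t^{-\alpha}$ for $t \in (0,T]$ with $\alpha \in [0,1)$; (ii) for a fixed $\vartheta \in (0, 1-\alpha)$ there are operators $A^{\vartheta}, A^{-\vartheta}$ with $\|A^{\vartheta} S_t\|_{L(V,V)} \le C_2 t^{-\vartheta}$ and $\|A^{-\vartheta}(S_t - I)\|_{L(V,V)} \le t^{\vartheta}$ for $t \in (0,T]$, and $A^{\vartheta} A^{-\vartheta} = I$ on $V$; (iii) $S$ is a semigroup: $S_{t+s} = S_t S_s$. Then for any bounded continuous $g : [0,T] \to W$ with $\sup_s \|g(s)\|_W \le R$, the function $u(t) = \int_0^t S_{t-s} g(s)\, ds$ satisfies $\|u(t_2) - u(t_1)\|_V \le C(R, T, \alpha, \vartheta)\, (t_2 - t_1)^{\vartheta}$ for all $0 \le t_1 < t_2 \le T$. -/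
open MeasureTheory Set

/-- Abstract deterministic core of Lemma 8: Hölder continuity in time of the
mild-solution convolution integral `u t = ∫_0^t S_{t-s} g(s) ds`, given
analytic-semigroup type estimates.  Here `AS t` plays the role of `A^ϑ S_t`
and `AmS t` the role of `A^{-ϑ}(S_t - I)`. -/
theorem stmt2
    (V W : Type*) [NormedAddCommGroup V] [NormedSpace ℝ V] [CompleteSpace V]
    [NormedAddCommGroup W] [NormedSpace ℝ W] [CompleteSpace W]
    (ι : V →L[ℝ] W) (hι : Function.Injective ι)
    (T : ℝ) (hT : 0 < T)
    (S : ℝ → (W →L[ℝ] V))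
    (C₁ C₂ α ϑ : ℝ) (hC₁ : 0 ≤ C₁) (hC₂ : 0 ≤ C₂)
    (hα0 : 0 ≤ α) (hα1 : α < 1) (hϑ0 : 0 < ϑ) (hϑ1 : ϑ < 1 - α)
    -- (i) smoothing estimate for the semigroup `S_t : W → V`
    (hS : ∀ t ∈ Set.Ioc (0:ℝ) T, ‖S t‖ ≤ C₁ * t ^ (-α))
    -- (ii) estimates for `A^ϑ S_t` and `A^{-ϑ}(S_t - I)`
    (AS AmS : ℝ → (V →L[ℝ] V))
    (hAS : ∀ t ∈ Set.Ioc (0:ℝ) T, ‖AS t‖ ≤ C₂ * t ^ (-ϑ))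
    (hAmS : ∀ t ∈ Set.Ioc (0:ℝ) T, ‖AmS t‖ ≤ t ^ ϑ)
    -- factorization `S_{t+h} - S_t = (A^ϑ S_{t/2}) (A^{-ϑ}(S_h - I)) S_{t/2}`,
    -- encoding `A^ϑ A^{-ϑ} = I` and the commutation of `A^{±ϑ}` with `S`
    (hfact : ∀ t h : ℝ, 0 < t → 0 < h → t + h ≤ T →
      S (t + h) - S t = ((AS (t / 2)).comp (AmS h)).comp (S (t / 2)))
    -- (iii) semigroup property
    (hsg : ∀ t s : ℝ, 0 < t → 0 < s → S (t + s) = (S t).comp (ι.comp (S s)))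
    (g : ℝ → W) (hg : Continuous g) (R : ℝ)
    (hgb : ∀ s ∈ Set.Icc (0:ℝ) T, ‖g s‖ ≤ R)
    (hint : ∀ t ∈ Set.Icc (0:ℝ) T,
      IntervalIntegrable (fun s => S (t - s) (g s)) volume 0 t) :
    ∃ C : ℝ, 0 < C ∧ ∀ t₁ t₂ : ℝ, 0 ≤ t₁ → t₁ < t₂ → t₂ ≤ T →
      ‖(∫ s in (0:ℝ)..t₂, S (t₂ - s) (g s)) -
        (∫ s in (0:ℝ)..t₁, S (t₁ - s) (g s))‖ ≤ C * (t₂ - t₁) ^ ϑ := by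

  have hR : 0 ≤ R := le_trans (norm_nonneg _) (hgb 0 ⟨le_refl 0, hT.le⟩)
  have h1α : 0 < 1 - α := by linarith
  have h1ϑα : 0 < 1 - (ϑ + α) := by linarith
  have hrm1 : (-1 : ℝ) < -(ϑ + α) := by linarith
  set A : ℝ := C₁ * R / (1 - α) * T ^ (1 - α - ϑ) with hA
  set B : ℝ := C₁ * C₂ * R * 2 ^ (ϑ + α) / (1 - (ϑ + α)) * T ^ (1 - (ϑ + α)) with hB
  have hA0 : 0 ≤ A := by
    apply mul_nonneg (div_nonneg (mul_nonneg hC₁ hR) h1α.le)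
    exact Real.rpow_nonneg hT.le _
  have hB0 : 0 ≤ B := by
    apply mul_nonneg (div_nonneg _ h1ϑα.le) (Real.rpow_nonneg hT.le _)
    exact mul_nonneg (mul_nonneg (mul_nonneg hC₁ hC₂) hR) (Real.rpow_nonneg (by norm_num) _)
  refine ⟨A + B + 1, by linarith, ?_⟩
  intro t₁ t₂ ht₁ hlt ht₂
  have hd : 0 < t₂ - t₁ := sub_pos.2 hlt
  have ht₂0 : 0 < t₂ := lt_of_le_of_lt ht₁ hlt
  have hdϑ : 0 ≤ (t₂ - t₁) ^ ϑ := Real.rpow_nonneg hd.le _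
  -- integrability facts
  have I2 : IntervalIntegrable (fun s => S (t₂ - s) (g s)) volume 0 t₂ :=
    hint t₂ ⟨ht₂0.le, ht₂⟩
  have I2a : IntervalIntegrable (fun s => S (t₂ - s) (g s)) volume 0 t₁ := by
    apply I2.mono_set
    rw [Set.uIcc_of_le ht₁, Set.uIcc_of_le ht₂0.le]
    exact Set.Icc_subset_Icc le_rfl hlt.le
  have I2b : IntervalIntegrable (fun s => S (t₂ - s) (g s)) volume t₁ t₂ := by
    apply I2.mono_set
    rw [Set.uIcc_of_le hlt.le, Set.uIcc_of_le ht₂0.le]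
    exact Set.Icc_subset_Icc ht₁ le_rfl
  have I1 : IntervalIntegrable (fun s => S (t₁ - s) (g s)) volume 0 t₁ :=
    hint t₁ ⟨ht₁, le_trans hlt.le ht₂⟩
  -- split
  have hsplit : (∫ s in (0:ℝ)..t₂, S (t₂ - s) (g s)) -
      (∫ s in (0:ℝ)..t₁, S (t₁ - s) (g s)) =
      (∫ s in (0:ℝ)..t₁, (S (t₂ - s) (g s) - S (t₁ - s) (g s))) +
      (∫ s in t₁..t₂, S (t₂ - s) (g s)) := by
    rw [intervalIntegral.integral_sub I2a I1,
      ← intervalIntegral.integral_add_adjacent_intervals I2a I2b]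
    abel
  rw [hsplit]
  refine le_trans (norm_add_le _ _) ?_
  -- tail term bound
  have htail : ‖∫ s in t₁..t₂, S (t₂ - s) (g s)‖ ≤ A * (t₂ - t₁) ^ ϑ := by
    have hbd : ∀ᵐ s ∂volume.restrict (Set.uIoc t₁ t₂),
        ‖S (t₂ - s) (g s)‖ ≤ C₁ * R * (t₂ - s) ^ (-α) := by
      have hne : ∀ᵐ s : ℝ ∂volume, s ≠ t₂ := by
        have : volume ({t₂} : Set ℝ) = 0 := Real.volume_singleton
        rw [ae_iff]; simpa using this
      filter_upwards [ae_restrict_mem measurableSet_uIoc, ae_restrict_of_ae hne]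
        with s hs hsne
      rw [Set.uIoc_of_le hlt.le] at hs
      have hs2 : 0 < t₂ - s := sub_pos.2 (lt_of_le_of_ne hs.2 hsne)
      have hsT : t₂ - s ≤ T := by
        have : 0 < s := lt_of_le_of_lt ht₁ hs.1
        linarith
      have h1 : ‖S (t₂ - s)‖ ≤ C₁ * (t₂ - s) ^ (-α) := hS _ ⟨hs2, hsT⟩
      have h2 : ‖g s‖ ≤ R := hgb s ⟨(lt_of_le_of_lt ht₁ hs.1).le, le_trans hs.2 ht₂⟩
      calc ‖S (t₂ - s) (g s)‖ ≤ ‖S (t₂ - s)‖ * ‖g s‖ :=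
            ContinuousLinearMap.le_opNorm _ _
        _ ≤ (C₁ * (t₂ - s) ^ (-α)) * R :=
            mul_le_mul h1 h2 (norm_nonneg _)
              (mul_nonneg hC₁ (Real.rpow_nonneg hs2.le _))
        _ = C₁ * R * (t₂ - s) ^ (-α) := by ring
    have hib : IntervalIntegrable (fun s => C₁ * R * (t₂ - s) ^ (-α)) volume t₁ t₂ := by
      apply IntervalIntegrable.const_mul
      have := (intervalIntegral.intervalIntegrable_rpow'
        (a := t₂ - t₁) (b := t₂ - t₂) (show (-1:ℝ) < -α by linarith)).comp_sub_left t₂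
      simpa using this
    refine le_trans (intervalIntegral.norm_integral_le_abs_of_norm_le hbd hib) ?_
    have hval : (∫ s in t₁..t₂, C₁ * R * (t₂ - s) ^ (-α)) =
        C₁ * R * ((t₂ - t₁) ^ (1 - α) / (1 - α)) := by
      rw [intervalIntegral.integral_const_mul]
      congr 1
      have := intervalIntegral.integral_comp_sub_left (a := t₁) (b := t₂)
        (fun x => x ^ (-α)) t₂
      rw [this, sub_self]
      rw [integral_rpow (Or.inl (show (-1:ℝ) < -α by linarith))]
      rw [Real.zero_rpow (by linarith)]
      norm_num
      ring_nf
    rw [hval, abs_of_nonneg (by positivity)]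
    have hsplitpow : (t₂ - t₁) ^ (1 - α) = (t₂ - t₁) ^ (1 - α - ϑ) * (t₂ - t₁) ^ ϑ := by
      rw [← Real.rpow_add hd]; ring_nf
    have hTb : (t₂ - t₁) ^ (1 - α - ϑ) ≤ T ^ (1 - α - ϑ) :=
      Real.rpow_le_rpow hd.le (by linarith) (by linarith)
    have hc : 0 ≤ C₁ * R / (1 - α) := div_nonneg (mul_nonneg hC₁ hR) h1α.le
    rw [hA]
    calc C₁ * R * ((t₂ - t₁) ^ (1 - α) / (1 - α))
        = C₁ * R / (1 - α) * (t₂ - t₁) ^ (1 - α - ϑ) * (t₂ - t₁) ^ ϑ := by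
          rw [hsplitpow]; ring
      _ ≤ C₁ * R / (1 - α) * T ^ (1 - α - ϑ) * (t₂ - t₁) ^ ϑ :=
          mul_le_mul_of_nonneg_right (mul_le_mul_of_nonneg_left hTb hc) hdϑ
  -- difference term bound
  have hdiff : ‖∫ s in (0:ℝ)..t₁, (S (t₂ - s) (g s) - S (t₁ - s) (g s))‖ ≤
      B * (t₂ - t₁) ^ ϑ := by
    set K : ℝ := C₁ * C₂ * R * 2 ^ (ϑ + α) * (t₂ - t₁) ^ ϑ with hK
    have hK0 : 0 ≤ K := by
      apply mul_nonneg _ hdϑ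
      exact mul_nonneg (mul_nonneg (mul_nonneg hC₁ hC₂) hR)
        (Real.rpow_nonneg (by norm_num) _)
    have hbd : ∀ᵐ s ∂volume.restrict (Set.uIoc 0 t₁),
        ‖S (t₂ - s) (g s) - S (t₁ - s) (g s)‖ ≤ K * (t₁ - s) ^ (-(ϑ + α)) := by
      have hne : ∀ᵐ s : ℝ ∂volume, s ≠ t₁ := by
        have : volume ({t₁} : Set ℝ) = 0 := Real.volume_singleton
        rw [ae_iff]; simpa using this
      filter_upwards [ae_restrict_mem measurableSet_uIoc, ae_restrict_of_ae hne]
        with s hs hsne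
      rw [Set.uIoc_of_le ht₁] at hs
      have hst : 0 < t₁ - s := sub_pos.2 (lt_of_le_of_ne hs.2 hsne)
      have hh : 0 < t₂ - t₁ := hd
      have hsum : t₁ - s + (t₂ - t₁) ≤ T := by
        have : 0 < s := hs.1
        linarith
      have hf := hfact (t₁ - s) (t₂ - t₁) hst hh hsum
      rw [show t₁ - s + (t₂ - t₁) = t₂ - s by ring] at hf
      have hhalf : (0:ℝ) < (t₁ - s) / 2 := by linarith
      have hhalfT : (t₁ - s) / 2 ≤ T := by
        have : 0 < s := hs.1
        linarith
      have hhT : t₂ - t₁ ≤ T := by linarith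
      have e1 : ‖AS ((t₁ - s) / 2)‖ ≤ C₂ * ((t₁ - s) / 2) ^ (-ϑ) :=
        hAS _ ⟨hhalf, hhalfT⟩
      have e2 : ‖AmS (t₂ - t₁)‖ ≤ (t₂ - t₁) ^ ϑ := hAmS _ ⟨hh, hhT⟩
      have e3 : ‖S ((t₁ - s) / 2)‖ ≤ C₁ * ((t₁ - s) / 2) ^ (-α) :=
        hS _ ⟨hhalf, hhalfT⟩
      have e4 : ‖g s‖ ≤ R := hgb s ⟨hs.1.le, by linarith [hs.2]⟩
      have hcn : ‖S (t₂ - s) - S (t₁ - s)‖ ≤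
          (C₂ * ((t₁ - s) / 2) ^ (-ϑ)) * ((t₂ - t₁) ^ ϑ) * (C₁ * ((t₁ - s) / 2) ^ (-α)) := by
        rw [hf]
        calc ‖((AS ((t₁ - s) / 2)).comp (AmS (t₂ - t₁))).comp (S ((t₁ - s) / 2))‖
            ≤ ‖(AS ((t₁ - s) / 2)).comp (AmS (t₂ - t₁))‖ * ‖S ((t₁ - s) / 2)‖ :=
              ContinuousLinearMap.opNorm_comp_le _ _
          _ ≤ ‖AS ((t₁ - s) / 2)‖ * ‖AmS (t₂ - t₁)‖ * ‖S ((t₁ - s) / 2)‖ := by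
              apply mul_le_mul_of_nonneg_right _ (norm_nonneg _)
              exact ContinuousLinearMap.opNorm_comp_le _ _
          _ ≤ (C₂ * ((t₁ - s) / 2) ^ (-ϑ)) * ((t₂ - t₁) ^ ϑ) * (C₁ * ((t₁ - s) / 2) ^ (-α)) := by
              apply mul_le_mul _ e3 (norm_nonneg _)
              · positivity
              · apply mul_le_mul e1 e2 (norm_nonneg _)
                positivity
      have hpow : ((t₁ - s) / 2) ^ (-ϑ) * ((t₁ - s) / 2) ^ (-α) =
          2 ^ (ϑ + α) * (t₁ - s) ^ (-(ϑ + α)) := by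
        rw [← Real.rpow_add hhalf, show -ϑ + -α = -(ϑ + α) by ring,
          Real.div_rpow hst.le (by norm_num : (0:ℝ) ≤ 2),
          Real.rpow_neg hst.le, Real.rpow_neg (by norm_num : (0:ℝ) ≤ 2)]
        field_simp
      calc ‖S (t₂ - s) (g s) - S (t₁ - s) (g s)‖
          = ‖(S (t₂ - s) - S (t₁ - s)) (g s)‖ := by
            simp [ContinuousLinearMap.sub_apply]
        _ ≤ ‖S (t₂ - s) - S (t₁ - s)‖ * ‖g s‖ := ContinuousLinearMap.le_opNorm _ _
        _ ≤ ((C₂ * ((t₁ - s) / 2) ^ (-ϑ)) * ((t₂ - t₁) ^ ϑ) *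
              (C₁ * ((t₁ - s) / 2) ^ (-α))) * R := by
            apply mul_le_mul hcn e4 (norm_nonneg _)
            positivity
        _ = C₁ * C₂ * R * (t₂ - t₁) ^ ϑ *
              (((t₁ - s) / 2) ^ (-ϑ) * ((t₁ - s) / 2) ^ (-α)) := by ring
        _ = K * (t₁ - s) ^ (-(ϑ + α)) := by rw [hpow, hK]; ring
    have hib : IntervalIntegrable (fun s => K * (t₁ - s) ^ (-(ϑ + α))) volume 0 t₁ := by
      apply IntervalIntegrable.const_mul
      have := (intervalIntegral.intervalIntegrable_rpow'
        (a := t₁ - 0) (b := t₁ - t₁) hrm1).comp_sub_left t₁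
      simpa using this
    refine le_trans (intervalIntegral.norm_integral_le_abs_of_norm_le hbd hib) ?_
    have hval : (∫ s in (0:ℝ)..t₁, K * (t₁ - s) ^ (-(ϑ + α))) =
        K * (t₁ ^ (1 - (ϑ + α)) / (1 - (ϑ + α))) := by
      rw [intervalIntegral.integral_const_mul]
      congr 1
      have := intervalIntegral.integral_comp_sub_left (a := (0:ℝ)) (b := t₁)
        (fun x => x ^ (-(ϑ + α))) t₁
      rw [this, sub_self, sub_zero]
      rw [integral_rpow (Or.inl hrm1)]
      rw [Real.zero_rpow (by linarith)]
      norm_num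
      ring_nf
    rw [hval, abs_of_nonneg (by positivity)]
    have ht₁T : t₁ ^ (1 - (ϑ + α)) ≤ T ^ (1 - (ϑ + α)) :=
      Real.rpow_le_rpow ht₁ (by linarith) h1ϑα.le
    calc K * (t₁ ^ (1 - (ϑ + α)) / (1 - (ϑ + α)))
        ≤ K * (T ^ (1 - (ϑ + α)) / (1 - (ϑ + α))) := by
          apply mul_le_mul_of_nonneg_left _ hK0
          exact div_le_div_of_nonneg_right ht₁T h1ϑα.le
      _ = B * (t₂ - t₁) ^ ϑ := by rw [hK, hB]; ring
  have : A * (t₂ - t₁) ^ ϑ + B * (t₂ - t₁) ^ ϑ ≤ (A + B + 1) * (t₂ - t₁) ^ ϑ := by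
    nlinarith
  linarith [hdiff, htail]
end

section
/- Discrete Gronwall lemma with singular weights: let $T>0$, $\alpha \in [0,1)$, $M \in \mathbb{N}$, $\Delta t = T/M$, and let $(e_m)_{m=0}^M$ be nonnegative reals satisfying $e_0 = 0$ and $e_m \le A + B \sum_{k=0}^{m-1} \Delta t\, (m\Delta t - k\Delta t)^{-\alpha} e_k$ for all $m \le M$, where $A, B \ge 0$. Then there is a constant $C = C(B, T, \alpha)$, independent of $M$, such that $e_m \le C A$ for all $m \in \{0, \dots, M\}$. -/
open Finset

lemma bern_step' (α : ℝ) (hα0 : 0 ≤ α) (hα1 : α < 1) (j : ℕ) :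
    (1-α) * ((j:ℝ)+1) ^ (-α) ≤ ((j:ℝ)+1) ^ (1-α) - (j:ℝ) ^ (1-α) := by
  set a : ℝ := (j:ℝ)+1 with ha
  have ha0 : (0:ℝ) < a := by positivity
  have h1 : (1:ℝ) ≤ a := by rw [ha]; exact le_add_of_nonneg_left (Nat.cast_nonneg j)
  have hs : (-1:ℝ) ≤ -1/a := by
    rw [neg_div]
    simp only [neg_le_neg_iff]
    rw [div_le_one ha0]; exact h1
  have hb := rpow_one_add_le_one_add_mul_self hs (by linarith : (0:ℝ) ≤ 1-α) (by linarith)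
  have key : (j:ℝ) ^ (1-α) ≤ a ^ (1-α) - (1-α) * a ^ (-α) := by
    have h2 : (1 + (-1/a)) = (j:ℝ)/a := by field_simp; rw [ha]; ring
    have h3 : ((j:ℝ)/a) ^ (1-α) = (j:ℝ)^(1-α) / a^(1-α) := by
      rw [Real.div_rpow (by positivity) ha0.le]
    rw [h2, h3] at hb
    have h4 := mul_le_mul_of_nonneg_right hb (Real.rpow_nonneg ha0.le (1-α))
    rw [div_mul_cancel₀ _ (by positivity : a^(1-α) ≠ 0)] at h4
    have hdiv : a^(1-α) / a = a^(-α) := by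
      nth_rewrite 2 [← Real.rpow_one a]
      rw [← Real.rpow_sub ha0]
      ring_nf
    have h5 : (1 + (1-α)*(-1/a)) * a^(1-α) = a^(1-α) - (1-α) * a^(-α) := by
      rw [← hdiv]
      field_simp
      ring
    rw [h5] at h4
    exact h4
  linarith

lemma sum_pow_le' (α : ℝ) (hα0 : 0 ≤ α) (hα1 : α < 1) (J : ℕ) :
    ∑ j ∈ range J, ((j:ℝ)+1) ^ (-α) ≤ (J:ℝ) ^ (1-α) / (1-α) := by
  have hβ : (0:ℝ) < 1-α := by linarith
  have tele : ∑ j ∈ range J, (((j:ℝ)+1)^(1-α) - (j:ℝ)^(1-α)) = (J:ℝ)^(1-α) - (0:ℝ)^(1-α) := by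
    have := Finset.sum_range_sub (fun n => ((n:ℝ))^(1-α)) J
    simpa using this
  have h0 : ((0:ℝ))^(1-α) = 0 := Real.zero_rpow (by linarith)
  have hsum : (1-α) * ∑ j ∈ range J, ((j:ℝ)+1) ^ (-α) ≤ (J:ℝ)^(1-α) := by
    rw [Finset.mul_sum]
    calc ∑ j ∈ range J, (1-α) * ((j:ℝ)+1)^(-α)
        ≤ ∑ j ∈ range J, (((j:ℝ)+1)^(1-α) - (j:ℝ)^(1-α)) :=
          Finset.sum_le_sum (fun j _ => bern_step' α hα0 hα1 j)
      _ = (J:ℝ)^(1-α) := by rw [tele, h0, sub_zero]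
  rw [le_div_iff₀ hβ]
  linarith [hsum]

set_option maxHeartbeats 1000000 in
/-- Singular discrete Gronwall lemma: the constant `C` depends only on
`B`, `T` and `α`, not on `M`. -/
theorem stmt5 (B T α : ℝ) (hB : 0 ≤ B) (hT : 0 < T) (hα0 : 0 ≤ α) (hα1 : α < 1) :
    ∃ C : ℝ, 0 < C ∧ ∀ (M : ℕ), 0 < M → ∀ (e : ℕ → ℝ) (A : ℝ), 0 ≤ A →
      (∀ m, 0 ≤ e m) → e 0 = 0 →
      (∀ m, m ≤ M → e m ≤ A + B * ∑ k ∈ Finset.range m,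
        (T / M) * (((m : ℝ) * (T / M) - (k : ℝ) * (T / M)) ^ (-α)) * e k) →
      ∀ m, m ≤ M → e m ≤ C * A := by
  have hβ : (0:ℝ) < 1 - α := by linarith
  set δ : ℝ := ((1-α)/(2*(B+1))) ^ ((1-α)⁻¹) with hδdef
  have hδ0 : 0 < δ := Real.rpow_pos_of_pos (by positivity) _
  have hδβ : δ ^ (1-α) = (1-α)/(2*(B+1)) := by
    rw [hδdef, ← Real.rpow_mul (by positivity), inv_mul_cancel₀ (ne_of_gt hβ), Real.rpow_one]
  have hcoef : B * (δ^(1-α)/(1-α)) ≤ 1/2 := by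
    have hne : (1-α) ≠ 0 := ne_of_gt hβ
    have hBp : (0:ℝ) < 2*(B+1) := by linarith
    rw [hδβ]
    have hq : (1 - α) / (2 * (B + 1)) / (1 - α) = 1/(2*(B+1)) := by field_simp
    rw [hq, mul_one_div, div_le_div_iff₀ hBp (by norm_num : (0:ℝ) < 2)]
    linarith
  refine ⟨2 * Real.exp (2*(B*δ^(-α))*T), by positivity, ?_⟩
  intro M hM e A hA he h0 hrec
  have hM0 : (0:ℝ) < (M:ℝ) := Nat.cast_pos.mpr hM
  set Δt : ℝ := T / (M:ℝ) with hΔtdef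
  have hΔt0 : 0 < Δt := div_pos hT hM0
  set r : ℝ := 1 + 2*(B*δ^(-α))*Δt with hrdef
  have hKnn : 0 ≤ B*δ^(-α) := mul_nonneg hB (Real.rpow_nonneg hδ0.le _)
  have hr1 : 1 ≤ r := by
    have := mul_nonneg (mul_nonneg (by norm_num : (0:ℝ) ≤ 2) hKnn) hΔt0.le
    rw [hrdef]; linarith
  have hr0 : 0 ≤ r := by linarith
  have hterm : ∀ j:ℕ, Δt * ((((j:ℝ)+1)*Δt)^(-α)) = ((j:ℝ)+1)^(-α) * Δt^((1:ℝ)-α) := by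
    intro j
    have hΔ : Δt^((1:ℝ)-α) = Δt * Δt^(-α) := by
      rw [show (1:ℝ)-α = 1+(-α) by ring, Real.rpow_add hΔt0, Real.rpow_one]
    rw [Real.mul_rpow (by positivity) hΔt0.le, hΔ]
    ring
  have main : ∀ m, m ≤ M → e m ≤ 2*A*r^m := by
    intro m
    induction m using Nat.strong_induction_on with
    | _ m IH =>
      intro hmM
      rcases Nat.eq_zero_or_pos m with rfl | hm0
      · rw [h0]
        have : (0:ℝ) ≤ 2*A*r^0 := mul_nonneg (by linarith) (pow_nonneg hr0 0)
        linarith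
      · -- reflect the sum
        have hreflect : ∑ k ∈ range m, Δt * (((m:ℝ)*Δt - (k:ℝ)*Δt)^(-α)) * e k
            = ∑ j ∈ range m, Δt * ((((j:ℝ)+1)*Δt)^(-α)) * e (m-1-j) := by
          refine ((Finset.sum_range_reflect
            (fun k => Δt * (((m:ℝ)*Δt - (k:ℝ)*Δt)^(-α)) * e k) m)).symm.trans ?_
          refine Finset.sum_congr rfl (fun j hj => ?_)
          rw [Finset.mem_range] at hj
          have h1 : ((m - 1 - j : ℕ) : ℝ) = (m:ℝ) - 1 - (j:ℝ) := by
            rw [Nat.cast_sub (by omega), Nat.cast_sub (by omega)]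
            push_cast; ring
          have h2 : (m:ℝ)*Δt - ((m-1-j:ℕ):ℝ)*Δt = ((j:ℝ)+1)*Δt := by rw [h1]; ring
          rw [h2]
        have hsplit : (∑ j ∈ (range m).filter (fun j : ℕ => ((j:ℝ)+1)*Δt < δ),
              Δt * ((((j:ℝ)+1)*Δt)^(-α)) * e (m-1-j))
            + (∑ j ∈ (range m).filter (fun j : ℕ => ¬(((j:ℝ)+1)*Δt < δ)),
              Δt * ((((j:ℝ)+1)*Δt)^(-α)) * e (m-1-j))
            = ∑ j ∈ range m, Δt * ((((j:ℝ)+1)*Δt)^(-α)) * e (m-1-j) :=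
          Finset.sum_filter_add_sum_filter_not _ _ _
        have h2Arm : (0:ℝ) ≤ 2*A*r^m := mul_nonneg (by linarith) (pow_nonneg hr0 m)
        -- recent part
        have hrecent : ∑ j ∈ (range m).filter (fun j : ℕ => ((j:ℝ)+1)*Δt < δ),
              Δt * ((((j:ℝ)+1)*Δt)^(-α)) * e (m-1-j)
            ≤ (δ^(1-α)/(1-α)) * (2*A*r^m) := by
          have hsub : (range m).filter (fun j : ℕ => ((j:ℝ)+1)*Δt < δ)
              ⊆ range (Nat.floor (δ/Δt)) := by
            intro j hj
            rw [Finset.mem_filter, Finset.mem_range] at hj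
            rw [Finset.mem_range]
            have h1 : ((j:ℝ)+1) ≤ δ/Δt := by
              rw [le_div_iff₀ hΔt0]; exact hj.2.le
            have h2 : j+1 ≤ Nat.floor (δ/Δt) := Nat.le_floor (by push_cast; linarith)
            omega
          set J := Nat.floor (δ/Δt) with hJdef
          have hJ : (J:ℝ) * Δt ≤ δ := by
            have h1 := Nat.floor_le (show (0:ℝ) ≤ δ/Δt by positivity)
            calc (J:ℝ) * Δt ≤ (δ/Δt) * Δt := by nlinarith
              _ = δ := by field_simp
          calc ∑ j ∈ (range m).filter (fun j : ℕ => ((j:ℝ)+1)*Δt < δ),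
                Δt * ((((j:ℝ)+1)*Δt)^(-α)) * e (m-1-j)
              ≤ ∑ j ∈ range J, Δt * ((((j:ℝ)+1)*Δt)^(-α)) * e (m-1-j) :=
                Finset.sum_le_sum_of_subset_of_nonneg hsub (fun j _ _ =>
                  mul_nonneg (mul_nonneg hΔt0.le (Real.rpow_nonneg (by positivity) _)) (he _))
            _ ≤ ∑ j ∈ range J, Δt * ((((j:ℝ)+1)*Δt)^(-α)) * (2*A*r^m) := by
                refine Finset.sum_le_sum fun j hj => ?_
                have hklt : m - 1 - j < m := by omega
                have hek := IH _ hklt (by omega)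
                have hpow : r^(m-1-j) ≤ r^m := pow_le_pow_right₀ hr1 (by omega)
                have h2A : (0:ℝ) ≤ 2*A := by linarith
                have he2 : e (m-1-j) ≤ 2*A*r^m := by
                  have := mul_le_mul_of_nonneg_left hpow h2A
                  calc e (m-1-j) ≤ 2*A*r^(m-1-j) := hek
                    _ ≤ 2*A*r^m := by rw [mul_assoc, mul_assoc] at this ⊢; linarith
                exact mul_le_mul_of_nonneg_left he2
                  (mul_nonneg hΔt0.le (Real.rpow_nonneg (by positivity) _))
            _ = (∑ j ∈ range J, ((j:ℝ)+1)^(-α)) * (Δt^((1:ℝ)-α) * (2*A*r^m)) := by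
                rw [Finset.sum_mul]
                refine Finset.sum_congr rfl fun j hj => ?_
                rw [hterm j]; ring
            _ ≤ ((J:ℝ)^(1-α)/(1-α)) * (Δt^((1:ℝ)-α) * (2*A*r^m)) := by
                refine mul_le_mul_of_nonneg_right (sum_pow_le' α hα0 hα1 J) ?_
                exact mul_nonneg (Real.rpow_nonneg hΔt0.le _) h2Arm
            _ = (((J:ℝ)*Δt)^((1:ℝ)-α)/(1-α)) * (2*A*r^m) := by
                rw [Real.mul_rpow (Nat.cast_nonneg J) hΔt0.le]; ring
            _ ≤ (δ^(1-α)/(1-α)) * (2*A*r^m) := by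
                refine mul_le_mul_of_nonneg_right ?_ h2Arm
                have : ((J:ℝ)*Δt)^((1:ℝ)-α) ≤ δ^(1-α) :=
                  Real.rpow_le_rpow (by positivity) hJ (by linarith)
                gcongr
        -- old part
        have hold : ∑ j ∈ (range m).filter (fun j : ℕ => ¬(((j:ℝ)+1)*Δt < δ)),
              Δt * ((((j:ℝ)+1)*Δt)^(-α)) * e (m-1-j)
            ≤ δ^(-α) * Δt * ∑ k ∈ range m, e k := by
          calc ∑ j ∈ (range m).filter (fun j : ℕ => ¬(((j:ℝ)+1)*Δt < δ)),
                Δt * ((((j:ℝ)+1)*Δt)^(-α)) * e (m-1-j)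
              ≤ ∑ j ∈ (range m).filter (fun j : ℕ => ¬(((j:ℝ)+1)*Δt < δ)),
                δ^(-α) * Δt * e (m-1-j) := by
                refine Finset.sum_le_sum fun j hj => ?_
                rw [Finset.mem_filter] at hj
                have hge : δ ≤ ((j:ℝ)+1)*Δt := not_lt.mp hj.2
                have hw : (((j:ℝ)+1)*Δt)^(-α) ≤ δ^(-α) := by
                  rw [Real.rpow_neg (by positivity), Real.rpow_neg hδ0.le]
                  refine inv_anti₀ (Real.rpow_pos_of_pos hδ0 α) ?_
                  exact Real.rpow_le_rpow hδ0.le hge hα0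
                have h' : Δt * ((((j:ℝ)+1)*Δt)^(-α)) ≤ δ^(-α) * Δt := by
                  rw [mul_comm]; exact mul_le_mul_of_nonneg_right hw hΔt0.le
                exact mul_le_mul_of_nonneg_right h' (he _)
            _ ≤ ∑ j ∈ range m, δ^(-α) * Δt * e (m-1-j) :=
                Finset.sum_le_sum_of_subset_of_nonneg (Finset.filter_subset _ _)
                  (fun j _ _ => mul_nonneg (mul_nonneg (Real.rpow_nonneg hδ0.le _) hΔt0.le) (he _))
            _ = δ^(-α) * Δt * ∑ j ∈ range m, e (m-1-j) := by
                rw [Finset.mul_sum]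
            _ = δ^(-α) * Δt * ∑ k ∈ range m, e k := by
                rw [Finset.sum_range_reflect (fun k => e k) m]
        -- combine
        have hBrec : B * ∑ j ∈ (range m).filter (fun j : ℕ => ((j:ℝ)+1)*Δt < δ),
              Δt * ((((j:ℝ)+1)*Δt)^(-α)) * e (m-1-j) ≤ A * r^m := by
          calc B * ∑ j ∈ (range m).filter (fun j : ℕ => ((j:ℝ)+1)*Δt < δ),
                Δt * ((((j:ℝ)+1)*Δt)^(-α)) * e (m-1-j)
              ≤ B * ((δ^(1-α)/(1-α)) * (2*A*r^m)) := mul_le_mul_of_nonneg_left hrecent hB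
            _ = (B * (δ^(1-α)/(1-α))) * (2*A*r^m) := by ring
            _ ≤ (1/2) * (2*A*r^m) := mul_le_mul_of_nonneg_right hcoef h2Arm
            _ = A * r^m := by ring
        have hBold : B * ∑ j ∈ (range m).filter (fun j : ℕ => ¬(((j:ℝ)+1)*Δt < δ)),
              Δt * ((((j:ℝ)+1)*Δt)^(-α)) * e (m-1-j) ≤ A * (r^m - 1) := by
          have step2 : ∑ k ∈ range m, e k ≤ ∑ k ∈ range m, 2*A*r^k :=
            Finset.sum_le_sum fun k hk => IH k (Finset.mem_range.mp hk)
              (le_trans (Nat.le_of_lt (Finset.mem_range.mp hk)) hmM)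
          have hgeom : (∑ k ∈ range m, r^k) * (2*(B*δ^(-α))*Δt) = r^m - 1 := by
            have gg := geom_sum_mul r m
            have : r - 1 = 2*(B*δ^(-α))*Δt := by rw [hrdef]; ring
            rw [this] at gg
            exact gg
          calc B * ∑ j ∈ (range m).filter (fun j : ℕ => ¬(((j:ℝ)+1)*Δt < δ)),
                Δt * ((((j:ℝ)+1)*Δt)^(-α)) * e (m-1-j)
              ≤ B * (δ^(-α) * Δt * ∑ k ∈ range m, e k) := mul_le_mul_of_nonneg_left hold hB
            _ ≤ B * (δ^(-α) * Δt * ∑ k ∈ range m, 2*A*r^k) := by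
                refine mul_le_mul_of_nonneg_left ?_ hB
                exact mul_le_mul_of_nonneg_left step2
                  (mul_nonneg (Real.rpow_nonneg hδ0.le _) hΔt0.le)
            _ = A * ((∑ k ∈ range m, r^k) * (2*(B*δ^(-α))*Δt)) := by
                rw [show (∑ k ∈ range m, 2*A*r^k) = 2*A*∑ k ∈ range m, r^k by
                  rw [← Finset.mul_sum]]
                ring
            _ = A * (r^m - 1) := by rw [hgeom]
        have hstart := hrec m hmM
        rw [hreflect] at hstart
        rw [← hsplit, mul_add] at hstart
        linarith [hBrec, hBold]
  intro m hmM
  have h := main m hmM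
  have hΔtM : Δt * (m:ℝ) ≤ T := by
    have h1 : (m:ℝ) ≤ (M:ℝ) := Nat.cast_le.mpr hmM
    have h2 : Δt * (M:ℝ) = T := by rw [hΔtdef]; field_simp
    nlinarith [hΔt0.le]
  have hrexp : r ≤ Real.exp (2*(B*δ^(-α))*Δt) := by
    have := Real.add_one_le_exp (2*(B*δ^(-α))*Δt)
    rw [hrdef]; linarith
  have hpowm : r^m ≤ Real.exp (2*(B*δ^(-α))*T) := by
    calc r^m ≤ (Real.exp (2*(B*δ^(-α))*Δt))^m := pow_le_pow_left₀ hr0 hrexp m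
      _ = Real.exp ((m:ℝ) * (2*(B*δ^(-α))*Δt)) := (Real.exp_nat_mul _ m).symm
      _ ≤ Real.exp (2*(B*δ^(-α))*T) := by
          refine Real.exp_le_exp.mpr ?_
          have := mul_le_mul_of_nonneg_left hΔtM (show (0:ℝ) ≤ 2*(B*δ^(-α)) by linarith)
          nlinarith
  have hfin : 2*A*r^m ≤ 2*A*Real.exp (2*(B*δ^(-α))*T) :=
    mul_le_mul_of_nonneg_left hpowm (by linarith)
  nlinarith [h, hfin]
end
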